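/- Every complex root z of the polynomial Q₂(T) satisfies |z| = 3. -/

import Mathlib

/-!
The roots of `Q₂` come in pairs `z, 9/z`, so `Q₂(z) = z⁵ g(z + 9/z)` for a real quintic `g`.
Sign changes of `g` at `-5, -4, 0, 2, 26/5, 11/2` give five real roots of `g` in `(-6, 6)`,
hence all of them. So for a root `z` of `Q₂`, `s = z + 9/z` is real with `s² < 36`: the quadratic
`z² - s z + 9` has negative discriminant, its roots are a conjugate pair, and `z z̄ = 9`.
-/

open Polynomial

/-- The Weil polynomial `Q₂(T) = Q₁(J(X)/𝔽₉, T)` of the intermediate Jacobian of the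
cubic threefold `X` of the paper over `𝔽₉`. -/
noncomputable def weilQ2 : Polynomial ℤ :=
  X ^ 10 - 6 * X ^ 9 + 23 * X ^ 8 - 76 * X ^ 7 + 221 * X ^ 6 - 535 * X ^ 5
    + 1989 * X ^ 4 - 6156 * X ^ 3 + 16767 * X ^ 2 - 39366 * X + 59049

open Set

theorem exists_strictMono_roots_of_sign_changes {f : ℝ → ℝ} (hf : Continuous f) {n : ℕ}
    {t : Fin (n + 1) → ℝ} (ht : Monotone t)
    (hsign : ∀ i : Fin n, f (t i.castSucc) * f (t i.succ) < 0) :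
    ∃ r : Fin n → ℝ, StrictMono r ∧ ∀ i, r i ∈ Ioo (t i.castSucc) (t i.succ) ∧ f (r i) = 0 := by
  have hroot (i : Fin n) : ∃ x ∈ Ioo (t i.castSucc) (t i.succ), f x = 0 := by
    have hle : t i.castSucc ≤ t i.succ := ht i.castSucc_lt_succ.le
    rcases mul_neg_iff.mp (hsign i) with ⟨hpos, hneg⟩ | ⟨hneg, hpos⟩
    · exact intermediate_value_Ioo' hle hf.continuousOn ⟨hneg, hpos⟩
    · exact intermediate_value_Ioo hle hf.continuousOn ⟨hneg, hpos⟩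
  choose r hr hr0 using hroot
  refine ⟨r, fun i j hij => ?_, fun i => ⟨hr i, hr0 i⟩⟩
  calc r i < t i.succ := (hr i).2
    _ ≤ t j.castSucc := ht (Fin.succ_le_castSucc_iff.mpr hij)
    _ < r j := (hr j).1

theorem Polynomial.exists_eq_of_aeval_eq_zero_of_natDegree_le_card {K L : Type*} [Field K]
    [CommRing L] [IsDomain L] [Algebra K L] {p : K[X]} (hp : p ≠ 0) {s : Finset K}
    (hs : ∀ x ∈ s, p.IsRoot x) (hcard : p.natDegree ≤ s.card) {z : L}
    (hz : aeval z p = 0) : ∃ x ∈ s, algebraMap K L x = z := by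
  set q := p.map (algebraMap K L)
  have hq : q ≠ 0 := Polynomial.map_ne_zero hp
  have hle : s.val.map (algebraMap K L) ≤ q.roots := by
    rw [Multiset.le_iff_subset (s.nodup.map (algebraMap K L).injective)]
    intro y hy
    obtain ⟨x, hx, rfl⟩ := Multiset.mem_map.mp hy
    rw [mem_roots hq, IsRoot, eval_map_algebraMap, aeval_algebraMap_apply, coe_aeval_eq_eval,
      (hs x hx).eq_zero, map_zero]
  have hroots : s.val.map (algebraMap K L) = q.roots := by
    refine Multiset.eq_of_le_of_card_le hle ?_
    calc Multiset.card q.roots ≤ q.natDegree := card_roots' q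
      _ = p.natDegree := natDegree_map _
      _ ≤ s.card := hcard
      _ = Multiset.card (s.val.map (algebraMap K L)) := (Multiset.card_map _ _).symm
  have hzq : z ∈ q.roots := by rwa [mem_roots hq, IsRoot, eval_map_algebraMap]
  rw [← hroots] at hzq
  exact Multiset.mem_map.mp hzq

theorem Complex.normSq_eq_of_sq_sub_mul_add_eq_zero {z : ℂ} {r q : ℝ} (hdisc : r ^ 2 < 4 * q)
    (hz : z ^ 2 - r * z + q = 0) : normSq z = q := by
  have hre := congrArg re hz
  have him := congrArg im hz
  simp only [sq, add_re, sub_re, mul_re, ofReal_re, ofReal_im, zero_mul, sub_zero, zero_re, add_im,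
    sub_im, mul_im, add_zero, zero_im] at hre him
  have hy : z.im ≠ 0 := by
    intro hy
    rw [hy] at hre
    nlinarith [sq_nonneg (2 * z.re - r)]
  have hx : 2 * z.re = r := by
    apply mul_right_cancel₀ hy; linarith
  rw [normSq_apply]
  linear_combination -hre + z.re * hx

noncomputable def realWeilQ2 : ℝ[X] :=
  X ^ 5 - 6 * X ^ 4 - 22 * X ^ 3 + 140 * X ^ 2 + 5 * X - 139

theorem natDegree_realWeilQ2 : realWeilQ2.natDegree = 5 := by
  unfold realWeilQ2; compute_degree!

theorem aeval_weilQ2_eq {z : ℂ} (hz : z ≠ 0) :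
    aeval z weilQ2 = z ^ 5 * aeval (z + 9 / z) realWeilQ2 := by
  simp only [weilQ2, realWeilQ2, map_add, map_sub, map_mul, map_pow, aeval_X, map_ofNat]
  field_simp
  ring

theorem exists_strictMono_roots_realWeilQ2 :
    ∃ r : Fin 5 → ℝ, StrictMono r ∧ ∀ i, r i ∈ Ioo (-6) 6 ∧ realWeilQ2.IsRoot (r i) := by
  let t : Fin 6 → ℝ := ![-5, -4, 0, 2, 26 / 5, 11 / 2]
  have ht : Monotone t := by
    refine Fin.monotone_iff_le_succ.mpr fun i => ?_
    fin_cases i <;> simp [t] <;> norm_num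
  have hsign (i : Fin 5) : realWeilQ2.eval (t i.castSucc) * realWeilQ2.eval (t i.succ) < 0 := by
    fin_cases i <;> simp [t, realWeilQ2] <;> norm_num
  obtain ⟨r, hr, hroot⟩ := exists_strictMono_roots_of_sign_changes realWeilQ2.continuous ht hsign
  refine ⟨r, hr, fun i => ⟨⟨?_, ?_⟩, (hroot i).2⟩⟩
  · linarith [(hroot i).1.1, ht (Fin.zero_le i.castSucc), show t 0 = -5 from rfl]
  · linarith [(hroot i).1.2, ht (Fin.le_last i.succ), show t (Fin.last 5) = 11 / 2 from rfl]

theorem exists_ofReal_eq_of_aeval_realWeilQ2_eq_zero {w : ℂ} (hw : aeval w realWeilQ2 = 0) :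
    ∃ x ∈ Ioo (-6 : ℝ) 6, (x : ℂ) = w := by
  obtain ⟨r, hr, hroot⟩ := exists_strictMono_roots_realWeilQ2
  have hne : realWeilQ2 ≠ 0 :=
    ne_zero_of_natDegree_gt (n := 0) (by rw [natDegree_realWeilQ2]; norm_num)
  obtain ⟨x, hx, rfl⟩ := exists_eq_of_aeval_eq_zero_of_natDegree_le_card hne
    (s := Finset.univ.map ⟨r, hr.injective⟩) (by simpa using fun i => (hroot i).2)
    (by simp [natDegree_realWeilQ2]) hw
  obtain ⟨i, -, rfl⟩ := Finset.mem_map.mp hx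
  exact ⟨r i, (hroot i).1, rfl⟩

/-- Every complex root `z` of `Q₂(T)` satisfies `|z| = 3`. -/
theorem weilQ2_roots_abs :
    ∀ z : ℂ, Polynomial.aeval z weilQ2 = 0 → ‖z‖ = 3 := by
  intro z hz
  have hz0 : z ≠ 0 := by
    rintro rfl
    simp only [weilQ2, map_add, map_sub, map_mul, map_pow, aeval_X, map_ofNat] at hz
    norm_num at hz
  rw [aeval_weilQ2_eq hz0, mul_eq_zero, or_iff_right (pow_ne_zero 5 hz0)] at hz
  obtain ⟨x, ⟨hx₁, hx₂⟩, hxz⟩ := exists_ofReal_eq_of_aeval_realWeilQ2_eq_zero hz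
  have hquad : z ^ 2 - x * z + (9 : ℝ) = 0 := by
    rw [hxz]; field_simp; push_cast; ring
  have hnormSq := Complex.normSq_eq_of_sq_sub_mul_add_eq_zero (by nlinarith) hquad
  rw [← Complex.sq_norm] at hnormSq
  nlinarith [norm_nonneg z]
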